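/- Let Φ_S : M → k* be proper, p : k* → h* the restriction map for a closed subgroup H ⊆ K, and assume p ∘ Φ_S is proper. Define Φⁿ_K(m, x, η, ξ) = Φ_S(m) + n·Φ_r(x) + φ_r(x) + ξ and Φⁿ_H(m, x, η, ξ) = p(nΦ_l(x) + φ_l(x)) + η on M × X × O'* × (Kρ)*, where Φ_l, Φ_r, φ_l, φ_r are continuous with φ_l, φ_r bounded, O'* and (Kρ)* are compact, and for every x there exists k ∈ K with k·Φ_r(x) = -Φ_l(x) (with p and Φ_S equivariant). Then there exist R, R' > 0 independent of n such that every zero (m, x, η, ξ) of (Φⁿ_H, Φⁿ_K) satisfies ‖Φ_S(m)‖ ≤ R and ‖Φ_r(x)‖ ≤ R'/n. -/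
import Mathlib


/-- The key estimate in the second computation: with `p ∘ Φ_S` proper, `φ_l, φ_r` bounded,
`η, ξ` ranging over compact sets, and `∀ x ∃ k, k·Φ_r(x) = -Φ_l(x)`, there exist `R, R' > 0`
independent of `n` such that every zero `(m,x,η,ξ)` of the moment map
`(p(nΦ_l + φ_l) + η, Φ_S + nΦ_r + φ_r + ξ)` satisfies `‖Φ_S(m)‖ ≤ R` and
`‖Φ_r(x)‖ ≤ R'/n`. -/
theorem stmt18
    {K M X 𝔨 𝔥 : Type*} [Group K]
    [NormedAddCommGroup 𝔨] [NormedSpace ℝ 𝔨]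
    [NormedAddCommGroup 𝔥] [NormedSpace ℝ 𝔥] [FiniteDimensional ℝ 𝔥]
    [DistribMulAction K 𝔨] [SMulCommClass K ℝ 𝔨]
    [TopologicalSpace M] [TopologicalSpace X] [MulAction K M]
    -- the invariant inner product: K acts by isometries on 𝔨
    (hiso : ∀ (k : K) (v : 𝔨), ‖k • v‖ = ‖v‖)
    (p : 𝔨 →L[ℝ] 𝔥)
    (ΦS : M → 𝔨) (hΦScont : Continuous ΦS)
    (hΦSequiv : ∀ (k : K) (m : M), ΦS (k • m) = k • ΦS m)
    (hproper : IsProperMap (fun m => p (ΦS m)))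
    (Φl Φr φl φr : X → 𝔨)
    (hΦl : Continuous Φl) (hΦr : Continuous Φr)
    (hφl : Continuous φl) (hφr : Continuous φr)
    (Cb : ℝ) (hbound : ∀ x : X, ‖φl x‖ ≤ Cb ∧ ‖φr x‖ ≤ Cb)
    (hflip : ∀ x : X, ∃ k : K, k • Φr x = -Φl x)
    (O's : Set 𝔥) (hO's : IsCompact O's)
    (Kρs : Set 𝔨) (hKρs : IsCompact Kρs) :
    ∃ R R' : ℝ, 0 < R ∧ 0 < R' ∧
      ∀ (n : ℕ), 1 ≤ n → ∀ (m : M) (x : X) (η : 𝔥) (ξ : 𝔨),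
        η ∈ O's → ξ ∈ Kρs →
        p ((n : ℝ) • Φl x + φl x) + η = 0 →
        ΦS m + (n : ℝ) • Φr x + φr x + ξ = 0 →
        ‖ΦS m‖ ≤ R ∧ ‖Φr x‖ ≤ R' / (n : ℝ) := by

  obtain ⟨Cη, hCη⟩ := hO's.isBounded.exists_norm_le
  obtain ⟨Cξ, hCξ⟩ := hKρs.isBounded.exists_norm_le
  set Cb' : ℝ := max Cb 0 with hCb'
  set Cξ' : ℝ := max Cξ 0 with hCξ'
  set Cη' : ℝ := max Cη 0 with hCη'
  have hCb'0 : (0:ℝ) ≤ Cb' := le_max_right _ _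
  have hCξ'0 : (0:ℝ) ≤ Cξ' := le_max_right _ _
  have hCη'0 : (0:ℝ) ≤ Cη' := le_max_right _ _
  set C : ℝ := Cη' + ‖p‖ * Cb' + ‖p‖ * Cb' + ‖p‖ * Cξ' with hC
  have hSc : IsCompact ((fun m => p (ΦS m)) ⁻¹' Metric.closedBall 0 C) :=
    hproper.isCompact_preimage (isCompact_closedBall 0 C)
  obtain ⟨R0, hR0⟩ := (hSc.image hΦScont).isBounded.exists_norm_le
  refine ⟨max R0 0 + 1, max R0 0 + 1 + Cb' + Cξ', by positivity, by positivity, ?_⟩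
  intro n hn m x η ξ hη hξ h1 h2
  obtain ⟨k, hk⟩ := hflip x
  have e2 : (n:ℝ) • Φr x = -(ΦS m + φr x + ξ) := by
    rw [eq_neg_iff_add_eq_zero, ← h2]; abel
  have e3 : (n:ℝ) • Φl x = ΦS (k • m) + k • φr x + k • ξ := by
    have hl : Φl x = -(k • Φr x) := by rw [hk, neg_neg]
    calc (n:ℝ) • Φl x = -((n:ℝ) • (k • Φr x)) := by rw [hl, smul_neg]
      _ = -(k • ((n:ℝ) • Φr x)) := by rw [← smul_comm k ((n:ℝ)) (Φr x)]
      _ = -(k • (-(ΦS m + φr x + ξ))) := by rw [e2]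
      _ = k • (ΦS m + φr x + ξ) := by rw [smul_neg, neg_neg]
      _ = ΦS (k • m) + k • φr x + k • ξ := by
          rw [smul_add, smul_add, hΦSequiv]
  have e4 : p (ΦS (k • m)) = -(η + p (φl x) + p (k • φr x) + p (k • ξ)) := by
    have h1' : (p (ΦS (k • m)) + p (k • φr x) + p (k • ξ)) + p (φl x) + η = 0 := by
      rw [← map_add, ← map_add, ← e3, ← map_add]; exact h1
    rw [eq_neg_iff_add_eq_zero, ← h1']; abel
  have t1 : ‖p (φl x)‖ ≤ ‖p‖ * Cb' :=
    (p.le_opNorm _).trans (mul_le_mul_of_nonneg_left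
      ((hbound x).1.trans (le_max_left _ _)) (norm_nonneg _))
  have t2 : ‖p (k • φr x)‖ ≤ ‖p‖ * Cb' := by
    refine (p.le_opNorm _).trans (mul_le_mul_of_nonneg_left ?_ (norm_nonneg _))
    rw [hiso]; exact (hbound x).2.trans (le_max_left _ _)
  have t3 : ‖p (k • ξ)‖ ≤ ‖p‖ * Cξ' := by
    refine (p.le_opNorm _).trans (mul_le_mul_of_nonneg_left ?_ (norm_nonneg _))
    rw [hiso]; exact (hCξ ξ hξ).trans (le_max_left _ _)
  have hsum : ‖η + p (φl x) + p (k • φr x) + p (k • ξ)‖ ≤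
      ‖η‖ + ‖p (φl x)‖ + ‖p (k • φr x)‖ + ‖p (k • ξ)‖ := by
    calc _ ≤ ‖η + p (φl x) + p (k • φr x)‖ + ‖p (k • ξ)‖ := norm_add_le _ _
      _ ≤ ‖η + p (φl x)‖ + ‖p (k • φr x)‖ + ‖p (k • ξ)‖ := by
          gcongr; exact norm_add_le _ _
      _ ≤ _ := by gcongr; exact norm_add_le _ _
  have hηb : ‖η‖ ≤ Cη' := (hCη η hη).trans (le_max_left _ _)
  have hnormp : ‖p (ΦS (k • m))‖ ≤ C := by
    rw [e4, norm_neg]; rw [hC]; linarith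
  have hmem : ΦS (k • m) ∈ ΦS '' ((fun m => p (ΦS m)) ⁻¹' Metric.closedBall 0 C) := by
    refine ⟨k • m, ?_, rfl⟩
    simpa [Metric.mem_closedBall, dist_zero_right] using hnormp
  have hΦSm : ‖ΦS m‖ ≤ max R0 0 + 1 := by
    have h1 : ‖ΦS (k • m)‖ ≤ R0 := hR0 _ hmem
    have h2' : ‖ΦS m‖ = ‖ΦS (k • m)‖ := by rw [hΦSequiv, hiso]
    rw [h2']
    calc ‖ΦS (k • m)‖ ≤ max R0 0 := h1.trans (le_max_left _ _)
      _ ≤ max R0 0 + 1 := by linarith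
  refine ⟨hΦSm, ?_⟩
  have hn0 : (0:ℝ) < (n:ℝ) := by exact_mod_cast hn.trans_lt' (by norm_num)
  rw [le_div_iff₀ hn0]
  have hns : ‖(n:ℝ) • Φr x‖ = ‖Φr x‖ * (n:ℝ) := by
    rw [norm_smul, Real.norm_natCast, mul_comm]
  have hbig : ‖(n:ℝ) • Φr x‖ ≤ ‖ΦS m‖ + ‖φr x‖ + ‖ξ‖ := by
    rw [e2, norm_neg]
    calc ‖ΦS m + φr x + ξ‖ ≤ ‖ΦS m + φr x‖ + ‖ξ‖ := norm_add_le _ _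
      _ ≤ ‖ΦS m‖ + ‖φr x‖ + ‖ξ‖ := by gcongr; exact norm_add_le _ _
  have hφrb : ‖φr x‖ ≤ Cb' := (hbound x).2.trans (le_max_left _ _)
  have hξb : ‖ξ‖ ≤ Cξ' := (hCξ ξ hξ).trans (le_max_left _ _)
  rw [hns] at hbig
  linarith
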